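/- arXiv:2202.13885 — 3 statements merged into one kernel-verified Lean document; each statement's English description precedes it below -/
import Mathlib

section
/- In SL₂(k), if t ∈ SL₂(k) is diagonal with distinct eigenvalues, then every upper unitriangular matrix is a product of a conjugate of t and a conjugate of t⁻¹; consequently U(k) ⊆ B_{t}(2), the ball of radius 2 in the word norm associated to {t}. -/
/-!
Conjugation by `t = diag(l, l⁻¹)` multiplies the corner entry of `[1, x; 0, 1]` by `l ^ 2`, so the
commutator of `[1, x; 0, 1]` with `t` is `[1, (1 - l ^ 2) x; 0, 1]`. As `1 - l ^ 2 ≠ 0`, taking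
`x = a / (1 - l ^ 2)` writes `[1, a; 0, 1]` as `(h t h⁻¹) t⁻¹`.
-/

namespace Matrix.SpecialLinearGroup

variable {R : Type*} [CommRing R]

def upperUnitriangular (a : R) : SpecialLinearGroup (Fin 2) R :=
  ⟨!![1, a; 0, 1], by simp [det_fin_two_of]⟩

@[simp]
lemma coe_upperUnitriangular (a : R) :
    (upperUnitriangular a : Matrix (Fin 2) (Fin 2) R) = !![1, a; 0, 1] :=
  rfl

lemma upperUnitriangular_add (a b : R) :
    upperUnitriangular (a + b) = upperUnitriangular a * upperUnitriangular b := by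
  ext i j
  fin_cases i <;> fin_cases j <;> simp [add_comm]

lemma upperUnitriangular_inv (a : R) : (upperUnitriangular a)⁻¹ = upperUnitriangular (-a) := by
  ext i j
  fin_cases i <;> fin_cases j <;> simp [coe_inv, adjugate_fin_two]

lemma conj_upperUnitriangular_of_coe_eq {t : SpecialLinearGroup (Fin 2) R} {l m : R}
    (ht : (t : Matrix (Fin 2) (Fin 2) R) = !![l, 0; 0, m]) (a : R) :
    t * upperUnitriangular a * t⁻¹ = upperUnitriangular (l ^ 2 * a) := by
  have hlm : l * m = 1 := by simpa [ht, det_fin_two_of] using t.det_coe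
  ext i j
  fin_cases i <;> fin_cases j <;>
    simp [ht, coe_inv, adjugate_fin_two, hlm, mul_comm m l]
  ring

lemma upperUnitriangular_commutator_of_coe_eq {t : SpecialLinearGroup (Fin 2) R} {l m : R}
    (ht : (t : Matrix (Fin 2) (Fin 2) R) = !![l, 0; 0, m]) (a : R) :
    upperUnitriangular a * t * (upperUnitriangular a)⁻¹ * t⁻¹ =
      upperUnitriangular ((1 - l ^ 2) * a) := by
  calc upperUnitriangular a * t * (upperUnitriangular a)⁻¹ * t⁻¹
      = upperUnitriangular a * (t * upperUnitriangular (-a) * t⁻¹) := by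
        simp only [upperUnitriangular_inv, mul_assoc]
    _ = upperUnitriangular ((1 - l ^ 2) * a) := by
        rw [conj_upperUnitriangular_of_coe_eq ht, ← upperUnitriangular_add]
        ring_nf

end Matrix.SpecialLinearGroup

open Matrix.SpecialLinearGroup in
/-- In `SL₂(k)`, if `t` is diagonal with distinct eigenvalues (`t = diag(λ, λ⁻¹)`,
`λ² ≠ 1`), then every upper unitriangular matrix is a product of a conjugate of `t`
and a conjugate of `t⁻¹`; i.e. `U(k) ⊆ B_t(2)`. -/
theorem stmt16 {k : Type*} [Field k] (l : k) (hl : l ^ 2 ≠ 1)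
    (t : Matrix.SpecialLinearGroup (Fin 2) k)
    (ht : (t : Matrix (Fin 2) (Fin 2) k) = !![l, 0; 0, l⁻¹]) :
    ∀ (u : Matrix.SpecialLinearGroup (Fin 2) k) (a : k),
      (u : Matrix (Fin 2) (Fin 2) k) = !![1, a; 0, 1] →
      ∃ h₁ h₂ : Matrix.SpecialLinearGroup (Fin 2) k,
        u = (h₁ * t * h₁⁻¹) * (h₂ * t⁻¹ * h₂⁻¹) := by
  intro u a hu
  have hl' : 1 - l ^ 2 ≠ 0 := sub_ne_zero.mpr hl.symm
  refine ⟨upperUnitriangular (a / (1 - l ^ 2)), 1, ?_⟩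
  rw [inv_one, one_mul, mul_one, upperUnitriangular_commutator_of_coe_eq ht,
    mul_div_cancel₀ a hl']
  exact Subtype.ext hu
end

section
/- Gauss-Bruhat decomposition bound for SL₂: let k be a field and let t ∈ SL₂(k) be a diagonal matrix with distinct eigenvalues. Then every element of SL₂(k) is a product of at most 14 conjugates of t or t⁻¹, i.e. SL₂(k) = B_t(14). (The proof uses SL₂(k) ⊆ B_{U(k)}(7), where U(k) is the upper unitriangular subgroup, together with U(k) ⊆ B_t(2).) -/
/-!
For `t = diag(l, l⁻¹)` the commutator `⁅t, u(x)⁆` of `t` with an upper unitriangular matrix is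
`u((l² - 1) x)`, and similarly for lower unitriangular matrices with `l⁻²` in place of `l²`. As
`l² ≠ 1`, every unitriangular matrix is therefore the product of a conjugate of `t` and a conjugate
of `t⁻¹`. Multiplying by a suitable lower unitriangular matrix makes the `(1, 0)` entry nonzero, and
then the Gauss decomposition writes the element as upper · lower · upper, so every element of
`SL₂(k)` is a product of four unitriangular matrices and hence lies in `B_t(8) ⊆ B_t(14)`.
-/

open Matrix
open scoped commutatorElement

def conjGen {H : Type*} [Group H] (S : Set H) : Set H :=
  {x | ∃ s ∈ S, ∃ h : H, x = h * s * h⁻¹ ∨ x = h * s⁻¹ * h⁻¹}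

def ball {H : Type*} [Group H] (S : Set H) (n : ℕ) : Set H :=
  {g | ∃ l : List H, l.length ≤ n ∧ (∀ x ∈ l, x ∈ conjGen S) ∧ l.prod = g}

section Ball

variable {H : Type*} [Group H] {S : Set H}

lemma ball_mono {m n : ℕ} (h : m ≤ n) : ball S m ⊆ ball S n := by
  rintro g ⟨L, hlen, hconj, rfl⟩
  exact ⟨L, hlen.trans h, hconj, rfl⟩

lemma mul_mem_ball {m n : ℕ} {a b : H} (ha : a ∈ ball S m) (hb : b ∈ ball S n) :
    a * b ∈ ball S (m + n) := by
  obtain ⟨La, hlena, hconja, rfl⟩ := ha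
  obtain ⟨Lb, hlenb, hconjb, rfl⟩ := hb
  refine ⟨La ++ Lb, by simpa using add_le_add hlena hlenb, ?_, List.prod_append⟩
  simpa only [List.mem_append, or_imp, forall_and] using ⟨hconja, hconjb⟩

lemma commutatorElement_mem_ball_two {s : H} (hs : s ∈ S) (h : H) : ⁅s, h⁆ ∈ ball S 2 := by
  refine ⟨[s, h * s⁻¹ * h⁻¹], rfl.le, ?_, by simp [commutatorElement_def, mul_assoc]⟩
  simp only [List.mem_cons, List.not_mem_nil, or_false, forall_eq_or_imp, forall_eq]
  exact ⟨⟨s, hs, 1, Or.inl (by group)⟩, ⟨s, hs, h, Or.inr rfl⟩⟩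

end Ball

namespace SL2

variable {k : Type*} [Field k]

def upper (x : k) : SpecialLinearGroup (Fin 2) k :=
  ⟨!![1, x; 0, 1], by simp [det_fin_two_of]⟩

def lower (x : k) : SpecialLinearGroup (Fin 2) k :=
  ⟨!![1, 0; x, 1], by simp [det_fin_two_of]⟩

@[simp] lemma coe_upper (x : k) : (upper x : Matrix (Fin 2) (Fin 2) k) = !![1, x; 0, 1] := rfl

@[simp] lemma coe_lower (x : k) : (lower x : Matrix (Fin 2) (Fin 2) k) = !![1, 0; x, 1] := rfl

lemma upper_mul_upper (x y : k) : upper x * upper y = upper (x + y) :=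
  Subtype.ext (by simp [add_comm])

lemma lower_mul_lower (x y : k) : lower x * lower y = lower (x + y) :=
  Subtype.ext (by simp)

@[simp] lemma lower_zero : lower (0 : k) = 1 :=
  Subtype.ext (by simp [one_fin_two])

lemma upper_inv (x : k) : (upper x)⁻¹ = upper (-x) :=
  Subtype.ext (by simp [adjugate_fin_two])

lemma lower_inv (x : k) : (lower x)⁻¹ = lower (-x) :=
  Subtype.ext (by simp [adjugate_fin_two])

section Diagonal

variable {l : k} {t : SpecialLinearGroup (Fin 2) k}
  (ht : (t : Matrix (Fin 2) (Fin 2) k) = !![l, 0; 0, l⁻¹])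
include ht

lemma ne_zero_of_coe_eq_diagonal : l ≠ 0 := by
  rintro rfl
  simpa [ht, det_fin_two_of] using t.det_coe

lemma coe_inv_eq_diagonal :
    ((t⁻¹ : SpecialLinearGroup (Fin 2) k) : Matrix (Fin 2) (Fin 2) k) = !![l⁻¹, 0; 0, l] := by
  simp [ht, adjugate_fin_two]

lemma conj_upper (x : k) : t * upper x * t⁻¹ = upper (l ^ 2 * x) := by
  have hl := ne_zero_of_coe_eq_diagonal ht
  refine Subtype.ext ?_
  simp [coe_inv_eq_diagonal ht, ht, hl, sq, mul_comm, mul_left_comm]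

lemma conj_lower (x : k) : t * lower x * t⁻¹ = lower (l⁻¹ ^ 2 * x) := by
  have hl := ne_zero_of_coe_eq_diagonal ht
  refine Subtype.ext ?_
  simp [coe_inv_eq_diagonal ht, ht, hl, sq, mul_comm, mul_left_comm]

lemma commutatorElement_upper (x : k) : ⁅t, upper x⁆ = upper ((l ^ 2 - 1) * x) := by
  rw [commutatorElement_def, conj_upper ht, upper_inv, upper_mul_upper]
  ring_nf

lemma commutatorElement_lower (x : k) : ⁅t, lower x⁆ = lower ((l⁻¹ ^ 2 - 1) * x) := by
  rw [commutatorElement_def, conj_lower ht, lower_inv, lower_mul_lower]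
  ring_nf

lemma upper_mem_ball (hl : l ^ 2 ≠ 1) (x : k) : upper x ∈ ball {t} 2 := by
  have hl' : l ^ 2 - 1 ≠ 0 := sub_ne_zero.mpr hl
  have h := commutatorElement_mem_ball_two (Set.mem_singleton t) (upper (x / (l ^ 2 - 1)))
  rwa [commutatorElement_upper ht, mul_div_cancel₀ x hl'] at h

lemma lower_mem_ball (hl : l ^ 2 ≠ 1) (x : k) : lower x ∈ ball {t} 2 := by
  have hl' : l⁻¹ ^ 2 - 1 ≠ 0 := sub_ne_zero.mpr (by rwa [inv_pow, inv_ne_one])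
  have h := commutatorElement_mem_ball_two (Set.mem_singleton t) (lower (x / (l⁻¹ ^ 2 - 1)))
  rwa [commutatorElement_lower ht, mul_div_cancel₀ x hl'] at h

end Diagonal

lemma eq_upper_mul_lower_mul_upper (g : SpecialLinearGroup (Fin 2) k) (hc : g 1 0 ≠ 0) :
    g = upper ((g 0 0 - 1) / g 1 0) * lower (g 1 0) * upper ((g 1 1 - 1) / g 1 0) := by
  have hdet : g 0 0 * g 1 1 - g 0 1 * g 1 0 = 1 := by
    rw [← det_fin_two]; exact g.det_coe
  ext i j
  fin_cases i <;> fin_cases j <;> simp <;> field_simp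
  · ring
  · linear_combination -hdet
  · ring

lemma exists_mul_lower_apply_one_zero_ne_zero (g : SpecialLinearGroup (Fin 2) k) :
    ∃ d, (g * lower d : SpecialLinearGroup (Fin 2) k) 1 0 ≠ 0 := by
  by_cases hc : g 1 0 = 0
  · have hdet : g 0 0 * g 1 1 = 1 := by
      simpa [hc] using (det_fin_two (g : Matrix (Fin 2) (Fin 2) k)).symm.trans g.det_coe
    exact ⟨1, by simpa [hc, mul_apply, Fin.sum_univ_two] using right_ne_zero_of_mul_eq_one hdet⟩
  · exact ⟨0, by simpa using hc⟩

lemma exists_eq_upper_mul_lower_mul_upper_mul_lower (g : SpecialLinearGroup (Fin 2) k) :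
    ∃ a b c d, g = upper a * lower b * upper c * lower d := by
  obtain ⟨d, hd⟩ := exists_mul_lower_apply_one_zero_ne_zero g
  have hg : g = g * lower d * lower (-d) := by
    rw [mul_assoc, lower_mul_lower, add_neg_cancel, lower_zero, mul_one]
  rw [hg, eq_upper_mul_lower_mul_upper _ hd]
  exact ⟨_, _, _, _, rfl⟩

end SL2

/-- If `t ∈ SL₂(k)` is diagonal with distinct eigenvalues, then every element of
`SL₂(k)` is a product of at most `14` conjugates of `t` or `t⁻¹`:
`SL₂(k) = B_t(14)`. -/
theorem stmt17 {k : Type*} [Field k] (l : k) (hl : l ^ 2 ≠ 1)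
    (t : Matrix.SpecialLinearGroup (Fin 2) k)
    (ht : (t : Matrix (Fin 2) (Fin 2) k) = !![l, 0; 0, l⁻¹]) :
    ∀ g : Matrix.SpecialLinearGroup (Fin 2) k, g ∈ ball ({t} : Set _) 14 := by
  intro g
  obtain ⟨a, b, c, d, rfl⟩ := SL2.exists_eq_upper_mul_lower_mul_upper_mul_lower g
  have hU := SL2.upper_mem_ball ht hl
  have hL := SL2.lower_mem_ball ht hl
  exact ball_mono (by norm_num)
    (mul_mem_ball (mul_mem_ball (mul_mem_ball (hU a) (hL b)) (hU c)) (hL d))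
end

section
/- Let g ∈ SLₙ(ℂ), with SLₙ(ℂ) acting on itself by conjugation. If the conjugacy class of g is Zariski closed in SLₙ(ℂ), then g is diagonalizable (i.e., semisimple: in the Jordan decomposition g = g_s g_u one has g_u = 1). -/
open Matrix Module

private theorem tri_aux : ∀ (m : ℕ) (V : Type) [AddCommGroup V] [Module ℂ V]
    [FiniteDimensional ℂ V], finrank ℂ V = m → ∀ f : Module.End ℂ V,
    ∃ b : Basis (Fin m) ℂ V, ∀ i j : Fin m, j < i → LinearMap.toMatrix b b f i j = 0 := by
  intro m
  induction m with
  | zero =>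
    intro V _ _ _ hdim f
    haveI : Subsingleton V := finrank_zero_iff.mp hdim
    exact ⟨Basis.empty V, fun i => i.elim0⟩
  | succ m IH =>
    intro V _ _ _ hdim f
    haveI : Nontrivial V := by
      apply Module.nontrivial_of_finrank_pos (R := ℂ) (M := V); omega
    obtain ⟨μ, hμ⟩ := Module.End.exists_eigenvalue f
    obtain ⟨v, hv⟩ := hμ.exists_hasEigenvector
    have hv0 : v ≠ 0 := hv.right
    have hfv : f v = μ • v := hv.apply_eq_smul
    have hWle : (ℂ ∙ v) ≤ (ℂ ∙ v).comap f := by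
      rw [Submodule.span_le]
      intro x hx
      rcases Set.mem_singleton_iff.mp hx with rfl
      rw [SetLike.mem_coe, Submodule.mem_comap, hfv]
      exact Submodule.smul_mem _ _ (Submodule.mem_span_singleton_self x)
    set f' := Submodule.mapQ (ℂ ∙ v) (ℂ ∙ v) f hWle with hf'
    have hq : finrank ℂ (V ⧸ (ℂ ∙ v)) = m := by
      have h1 := Submodule.finrank_quotient_add_finrank (ℂ ∙ v)
      have h2 : finrank ℂ (ℂ ∙ v) = 1 := finrank_span_singleton hv0
      omega
    obtain ⟨c, hc⟩ := IH (V ⧸ (ℂ ∙ v)) hq f'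
    choose u hu using fun i => Submodule.mkQ_surjective (ℂ ∙ v) (c i)
    have hmk0 : Submodule.mkQ (ℂ ∙ v) v = 0 := by
      rw [Submodule.mkQ_apply, Submodule.Quotient.mk_eq_zero]
      exact Submodule.mem_span_singleton_self v
    have hli : LinearIndependent ℂ (Fin.cons v u : Fin (m+1) → V) := by
      rw [Fintype.linearIndependent_iff]
      intro a ha
      have hproj : ∀ k : Fin m, a k.succ = 0 := by
        have h2 := congrArg (Submodule.mkQ (ℂ ∙ v)) ha
        rw [map_sum, map_zero] at h2
        simp only [_root_.map_smul, Fin.sum_univ_succ, Fin.cons_zero, Fin.cons_succ, hmk0, hu,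
          smul_zero, zero_add] at h2
        exact Fintype.linearIndependent_iff.mp c.linearIndependent _ h2
      intro i
      rcases Fin.eq_zero_or_eq_succ i with rfl | ⟨k, rfl⟩
      · rw [Fin.sum_univ_succ] at ha
        simp only [Fin.cons_zero, Fin.cons_succ, hproj, zero_smul, Finset.sum_const_zero,
          add_zero] at ha
        exact (smul_eq_zero.mp ha).resolve_right hv0
      · exact hproj k
    have hcard : Fintype.card (Fin (m+1)) = finrank ℂ V := by simp [hdim]
    let b : Basis (Fin (m+1)) ℂ V := basisOfLinearIndependentOfCardEqFinrank hli hcard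
    have hb : ⇑b = Fin.cons v u := coe_basisOfLinearIndependentOfCardEqFinrank hli hcard
    refine ⟨b, fun i j hji => ?_⟩
    rw [LinearMap.toMatrix_apply]
    rcases Fin.eq_zero_or_eq_succ j with rfl | ⟨j0, rfl⟩
    · have : b 0 = v := by rw [hb]; rfl
      rw [this, hfv, ← this, _root_.map_smul, Basis.repr_self]
      have : i ≠ 0 := (Fin.pos_iff_ne_zero.mp hji)
      simp [Finsupp.single_apply, Ne.symm this]
    · -- j = j0.succ
      have hbsucc : ∀ k : Fin m, b k.succ = u k := fun k => by rw [hb]; exact Fin.cons_succ _ _ _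
      have hb0 : b 0 = v := by rw [hb]; rfl
      have key : f (b j0.succ) - (∑ k : Fin m, (c.repr (f' (c j0))) k • b k.succ) ∈ (ℂ ∙ v) := by
        rw [← Submodule.Quotient.mk_eq_zero, ← Submodule.mkQ_apply, map_sub, map_sum]
        have h3 : Submodule.mkQ (ℂ ∙ v) (f (b j0.succ)) = f' (c j0) := by
          rw [hbsucc, ← hu j0, hf']
          simp only [Submodule.mkQ_apply, Submodule.mapQ_apply]
        rw [h3]
        simp only [_root_.map_smul, hbsucc, hu]
        rw [Basis.sum_repr, sub_self]
      obtain ⟨a0, ha0⟩ := Submodule.mem_span_singleton.mp key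
      have hsum : f (b j0.succ) = ∑ i : Fin (m+1),
          (Fin.cons a0 (fun k => (c.repr (f' (c j0))) k) : Fin (m+1) → ℂ) i • b i := by
        rw [Fin.sum_univ_succ]
        simp only [Fin.cons_zero, Fin.cons_succ, hb0]
        rw [ha0]
        abel
      rw [hsum, Basis.repr_sum_self]
      rcases Fin.eq_zero_or_eq_succ i with rfl | ⟨k, rfl⟩
      · exact absurd hji (by simp)
      · rw [Fin.cons_succ]
        have : j0 < k := by rwa [Fin.succ_lt_succ_iff] at hji
        have := hc k j0 this
        rwa [LinearMap.toMatrix_apply] at this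

private theorem tri_matrix (n : ℕ) (A : Matrix (Fin n) (Fin n) ℂ) :
    ∃ P : Matrix (Fin n) (Fin n) ℂ, IsUnit P.det ∧
      ∀ i j : Fin n, j < i → (P⁻¹ * A * P) i j = 0 := by
  obtain ⟨b, hbtri⟩ := tri_aux n (Fin n → ℂ) (by simp) (Matrix.toLin' A)
  refine ⟨(Pi.basisFun ℂ (Fin n)).toMatrix b, ?_, ?_⟩
  · exact Matrix.isUnit_det_of_left_inverse
      (Basis.toMatrix_mul_toMatrix_flip b (Pi.basisFun ℂ (Fin n)))
  · have hPinv : ((Pi.basisFun ℂ (Fin n)).toMatrix b)⁻¹ = b.toMatrix (Pi.basisFun ℂ (Fin n)) :=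
      Matrix.inv_eq_left_inv (Basis.toMatrix_mul_toMatrix_flip b (Pi.basisFun ℂ (Fin n)))
    have h1 : LinearMap.toMatrix (Pi.basisFun ℂ (Fin n)) (Pi.basisFun ℂ (Fin n))
        (Matrix.toLin' A) = A := by
      rw [LinearMap.toMatrix_eq_toMatrix', LinearMap.toMatrix'_toLin']
    have h2 := basis_toMatrix_mul_linearMap_toMatrix_mul_basis_toMatrix
      (b := b) (b' := Pi.basisFun ℂ (Fin n)) (c := b) (c' := Pi.basisFun ℂ (Fin n))
      (f := Matrix.toLin' A)
    rw [h1] at h2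
    rw [hPinv, h2]
    exact hbtri


/-- If the conjugacy class of `g ∈ SLₙ(ℂ)` is Zariski closed (i.e. it is the common
zero locus of a family of polynomials in the matrix entries), then `g` is
diagonalizable. -/
theorem stmt19 (n : ℕ) (g : Matrix (Fin n) (Fin n) ℂ) (hg : g.det = 1)
    (hclosed : ∃ I : Set (MvPolynomial (Fin n × Fin n) ℂ),
      {x : Matrix (Fin n) (Fin n) ℂ |
          ∃ h : Matrix (Fin n) (Fin n) ℂ, h.det = 1 ∧ x = h * g * h⁻¹}
        = {x : Matrix (Fin n) (Fin n) ℂ |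
            ∀ p ∈ I, MvPolynomial.eval (fun ij => x ij.1 ij.2) p = 0}) :
    ∃ P : Matrix (Fin n) (Fin n) ℂ, IsUnit P ∧ (P⁻¹ * g * P).IsDiag := by
  rcases Nat.eq_zero_or_pos n with rfl | hn
  · exact ⟨1, isUnit_one, fun i j _ => i.elim0⟩
  obtain ⟨P₀, hP₀, hT⟩ := tri_matrix n g
  set T := P₀⁻¹ * g * P₀ with hTdef
  obtain ⟨I, hI⟩ := hclosed
  set X : ℂ → Matrix (Fin n) (Fin n) ℂ :=
    fun t => Matrix.of fun i j => if (i:ℕ) ≤ (j:ℕ) then T i j * t ^ ((j:ℕ) - (i:ℕ)) else 0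
    with hX
  have hkey : ∀ t : ℂ, t ≠ 0 →
      ∃ h : Matrix (Fin n) (Fin n) ℂ, h.det = 1 ∧ X t = h * g * h⁻¹ := by
    intro t ht
    set E : ℕ := ∑ i : Fin n, (n - 1 - (i : ℕ)) with hE
    obtain ⟨z, hz⟩ := IsAlgClosed.exists_pow_nat_eq (k := ℂ) (P₀.det * (t ^ E)⁻¹) hn
    have htE : (t : ℂ) ^ E ≠ 0 := pow_ne_zero _ ht
    have hz0 : z ≠ 0 := by
      have : z ^ n ≠ 0 := by
        rw [hz]
        exact mul_ne_zero hP₀.ne_zero (inv_ne_zero htE)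
      exact fun h => this (by rw [h, zero_pow (by omega)])
    set u : Fin n → ℂ := fun i => z * t ^ (n - 1 - (i : ℕ)) with hu
    have hu0 : ∀ i, u i ≠ 0 := fun i => mul_ne_zero hz0 (pow_ne_zero _ ht)
    refine ⟨Matrix.diagonal u * P₀⁻¹, ?_, ?_⟩
    · rw [Matrix.det_mul, Matrix.det_diagonal, Matrix.det_nonsing_inv,
        Ring.inverse_eq_inv']
      have hprod : ∏ i : Fin n, u i = z ^ n * t ^ E := by
        rw [hu, hE]
        simp only [Finset.prod_mul_distrib, Finset.prod_const, Finset.card_univ,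
          Fintype.card_fin, Finset.prod_pow_eq_pow_sum]
      rw [hprod, hz]
      field_simp
      exact div_self hP₀.ne_zero
    · have hconj : Matrix.diagonal u * P₀⁻¹ * g * (Matrix.diagonal u * P₀⁻¹)⁻¹
          = Matrix.diagonal u * T * Matrix.diagonal (fun i => (u i)⁻¹) := by
        have hdinv : (Matrix.diagonal u)⁻¹ = Matrix.diagonal (fun i => (u i)⁻¹) :=
          Matrix.inv_eq_left_inv (by
            rw [Matrix.diagonal_mul_diagonal]
            convert Matrix.diagonal_one with i
            exact inv_mul_cancel₀ (hu0 i))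
        rw [Matrix.mul_inv_rev, Matrix.nonsing_inv_nonsing_inv P₀ hP₀, hdinv, hTdef]
        noncomm_ring
      rw [hconj]
      ext i j
      rw [Matrix.mul_diagonal, Matrix.diagonal_mul]
      simp only [hX, Matrix.of_apply]
      split_ifs with hle
      · have hjn : (j : ℕ) < n := j.isLt
        have hsplit : n - 1 - (i : ℕ) = ((j : ℕ) - (i : ℕ)) + (n - 1 - (j : ℕ)) := by omega
        rw [hu]
        simp only []
        rw [hsplit, pow_add]
        have h1 : (t : ℂ) ^ (n - 1 - (j : ℕ)) ≠ 0 := pow_ne_zero _ ht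
        field_simp
      · rw [hT i j (by exact Fin.lt_def.mpr (by omega))]
        ring
  have hXmem : ∀ t : ℂ, t ≠ 0 → ∀ p ∈ I,
      MvPolynomial.eval (fun ij => X t ij.1 ij.2) p = 0 := by
    intro t ht
    have hmem : X t ∈ {x : Matrix (Fin n) (Fin n) ℂ |
        ∃ h : Matrix (Fin n) (Fin n) ℂ, h.det = 1 ∧ x = h * g * h⁻¹} := hkey t ht
    rwa [hI] at hmem
  have hX0mem : ∀ p ∈ I, MvPolynomial.eval (fun ij => X 0 ij.1 ij.2) p = 0 := by
    intro p hp
    set q : Polynomial ℂ := MvPolynomial.eval₂ Polynomial.C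
      (fun ij : Fin n × Fin n => if (ij.1 : ℕ) ≤ (ij.2 : ℕ) then
        Polynomial.C (T ij.1 ij.2) * Polynomial.X ^ ((ij.2 : ℕ) - (ij.1 : ℕ)) else 0) p with hq
    have heval : ∀ t : ℂ, Polynomial.eval t q =
        MvPolynomial.eval (fun ij => X t ij.1 ij.2) p := by
      intro t
      have h1 : Polynomial.eval t q = (Polynomial.evalRingHom t) q := rfl
      rw [h1, hq, MvPolynomial.eval₂_comp_left (Polynomial.evalRingHom t)]
      have h2 : (Polynomial.evalRingHom t).comp Polynomial.C = RingHom.id ℂ :=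
        RingHom.ext fun a => Polynomial.eval_C
      have h3 : ((Polynomial.evalRingHom t) ∘ fun ij : Fin n × Fin n =>
          if (ij.1 : ℕ) ≤ (ij.2 : ℕ) then
            Polynomial.C (T ij.1 ij.2) * Polynomial.X ^ ((ij.2 : ℕ) - (ij.1 : ℕ)) else 0)
          = fun ij : Fin n × Fin n => X t ij.1 ij.2 := by
        funext ij
        simp only [Function.comp_apply, hX, Matrix.of_apply]
        split_ifs with hle <;> simp
      rw [h2, h3, MvPolynomial.eval₂_id]
    have hq0 : q = 0 := by
      apply Polynomial.eq_zero_of_infinite_isRoot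
      apply Set.Infinite.mono (s := ({0}ᶜ : Set ℂ))
      · intro x hx
        have hx0 : x ≠ 0 := hx
        show Polynomial.IsRoot q x
        rw [Polynomial.IsRoot, heval x]
        exact hXmem x hx0 p hp
      · exact (Set.finite_singleton (0 : ℂ)).infinite_compl
    rw [← heval 0, hq0]
    simp
  have hX0orbit : X 0 ∈ {x : Matrix (Fin n) (Fin n) ℂ |
      ∃ h : Matrix (Fin n) (Fin n) ℂ, h.det = 1 ∧ x = h * g * h⁻¹} := by
    rw [hI]; exact hX0mem
  obtain ⟨h, hdet, hX0⟩ := hX0orbit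
  have hhu : IsUnit h.det := hdet ▸ isUnit_one
  refine ⟨h⁻¹, ?_, ?_⟩
  · rw [Matrix.isUnit_iff_isUnit_det, Matrix.det_nonsing_inv, hdet]
    simp
  · rw [Matrix.nonsing_inv_nonsing_inv h hhu, ← hX0]
    intro i j hij
    simp only [hX, Matrix.of_apply]
    split_ifs with hle
    · have hne : (i : ℕ) ≠ (j : ℕ) := fun hc => hij (Fin.ext hc)
      rw [zero_pow (by omega), mul_zero]
    · rfl
end
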